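/- arXiv:2204.00126 — 6 statements merged into one kernel-verified Lean document; each statement's English description precedes it below -/
import Mathlib

section
/- Let Θ be a nonempty set and for each θ ∈ Θ let (p_k(θ))_{k≥0} be nonnegative reals with ∑_{k≥0} p_k(θ) = 1 and p_+(θ) := 1 − p_0(θ) > 0. Let (m_k)_{k≥1} be naturals with finite support, m_+ := ∑_{k≥1} m_k ≥ 1, n ≥ m_+ with m_0 := n − m_+ ≥ 1. Define L(θ,ψ) := (∏_{k≥1} p_k(θ)^{m_k}) ψ^{m_+} ((1−ψ) + ψ p_0(θ))^{m_0} and L₁(θ) := ∏_{k≥1}(p_k(θ)/p_+(θ))^{m_k}. Suppose θ̂ maximizes L₁ over Θ and that ψ̂ := m_+/(n p_+(θ̂)) ≤ 1. Then for all θ ∈ Θ and all ψ ∈ [0,1], L(θ,ψ) ≤ L(θ̂, ψ̂); that is, the conditional-likelihood estimator (θ̂, ψ̂) is a maximum likelihood estimator. -/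
open Real in
lemma pow_mul_one_sub_pow_le (a b : ℕ) (ha : 0 < a) (hb : 0 < b)
    (t : ℝ) (ht0 : 0 ≤ t) (ht1 : t ≤ 1) :
    t ^ a * (1 - t) ^ b ≤ ((a : ℝ) / (a + b)) ^ a * ((b : ℝ) / (a + b)) ^ b := by
  set A : ℝ := (a : ℝ) with hA
  set B : ℝ := (b : ℝ) with hB
  have hApos : 0 < A := by rw [hA]; exact_mod_cast ha
  have hBpos : 0 < B := by rw [hB]; exact_mod_cast hb
  have hN : 0 < A + B := by linarith
  have h1t : 0 ≤ 1 - t := by linarith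
  have hw : A / (A + B) + B / (A + B) = 1 := by field_simp
  set w₁ : ℝ := A / (A + B) with hw₁
  set w₂ : ℝ := B / (A + B) with hw₂
  have hw₁0 : 0 ≤ w₁ := by positivity
  have hw₂0 : 0 ≤ w₂ := by positivity
  set F : ℝ := ((A + B) / A) ^ w₁ * ((A + B) / B) ^ w₂ with hF
  have hFpos : 0 < F := by positivity
  have key : (t ^ w₁ * (1 - t) ^ w₂) * F ≤ 1 := by
    have h := Real.geom_mean_le_arith_mean2_weighted hw₁0 hw₂0
      (by positivity : (0:ℝ) ≤ t * ((A + B) / A))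
      (by positivity : (0:ℝ) ≤ (1 - t) * ((A + B) / B)) hw
    calc (t ^ w₁ * (1 - t) ^ w₂) * F
        = (t * ((A + B) / A)) ^ w₁ * ((1 - t) * ((A + B) / B)) ^ w₂ := by
          rw [Real.mul_rpow ht0 (by positivity), Real.mul_rpow h1t (by positivity), hF]; ring
      _ ≤ w₁ * (t * ((A + B) / A)) + w₂ * ((1 - t) * ((A + B) / B)) := h
      _ = t + (1 - t) := by rw [hw₁, hw₂]; field_simp
      _ = 1 := by ring
  have hGF : (w₁ ^ w₁ * w₂ ^ w₂) * F = 1 := by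
    rw [hF]
    have e1 : w₁ ^ w₁ * ((A + B) / A) ^ w₁ = 1 := by
      rw [← Real.mul_rpow hw₁0 (by positivity), hw₁,
        div_mul_div_comm, mul_comm, div_self (by positivity), Real.one_rpow]
    have e2 : w₂ ^ w₂ * ((A + B) / B) ^ w₂ = 1 := by
      rw [← Real.mul_rpow hw₂0 (by positivity), hw₂,
        div_mul_div_comm, mul_comm, div_self (by positivity), Real.one_rpow]
    calc w₁ ^ w₁ * w₂ ^ w₂ * (((A + B) / A) ^ w₁ * ((A + B) / B) ^ w₂)
        = (w₁ ^ w₁ * ((A + B) / A) ^ w₁) * (w₂ ^ w₂ * ((A + B) / B) ^ w₂) := by ring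
      _ = 1 := by rw [e1, e2, one_mul]
  have key2 : t ^ w₁ * (1 - t) ^ w₂ ≤ w₁ ^ w₁ * w₂ ^ w₂ :=
    le_of_mul_le_mul_right (by rw [hGF]; exact key) hFpos
  have key3 := Real.rpow_le_rpow (by positivity) key2 hN.le
  have e : ∀ x : ℝ, 0 ≤ x → ∀ (w : ℝ) (c : ℕ), w * (A + B) = (c : ℝ) →
      (x ^ w) ^ (A + B) = x ^ c := by
    intro x hx w c hc
    rw [← Real.rpow_mul hx, hc, Real.rpow_natCast]
  have hw1c : w₁ * (A + B) = (a : ℝ) := by rw [hw₁]; field_simp; exact hA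
  have hw2c : w₂ * (A + B) = (b : ℝ) := by rw [hw₂]; field_simp; exact hB
  rw [Real.mul_rpow (by positivity) (by positivity),
      Real.mul_rpow (by positivity) (by positivity),
      e t ht0 w₁ a hw1c, e (1-t) h1t w₂ b hw2c,
      e w₁ hw₁0 w₁ a hw1c, e w₂ hw₂0 w₂ b hw2c] at key3
  simpa [hw₁, hw₂] using key3

/-- In the mixture-detection occupancy model, the two-stage conditional-likelihood
estimator `(θ̂, ψ̂)` with `ψ̂ = m₊/(n p₊(θ̂))` maximizes the full likelihood `L`. -/

theorem conditional_likelihood_is_MLE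
    {Θ : Type*} [Nonempty Θ]
    (p : Θ → ℕ → ℝ)
    (hp_nonneg : ∀ θ k, 0 ≤ p θ k)
    (hp_summable : ∀ θ, Summable (p θ))
    (hp_sum : ∀ θ, ∑' k, p θ k = 1)
    (pplus : Θ → ℝ) (hpplus : ∀ θ, pplus θ = 1 - p θ 0)
    (hpplus_pos : ∀ θ, 0 < pplus θ)
    (m : ℕ → ℕ) (hm_fin : (Function.support m).Finite) (hm0 : m 0 = 0)
    (mplus : ℕ) (hmplus : mplus = ∑ᶠ k, m k) (hmplus_pos : 1 ≤ mplus)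
    (n : ℕ) (hn : mplus ≤ n)
    (m0 : ℕ) (hm0def : m0 = n - mplus) (hm0_pos : 1 ≤ m0)
    (L : Θ → ℝ → ℝ)
    (hL : ∀ θ ψ, L θ ψ =
      (∏ᶠ k, p θ k ^ m k) * ψ ^ mplus * ((1 - ψ) + ψ * p θ 0) ^ m0)
    (L1 : Θ → ℝ)
    (hL1 : ∀ θ, L1 θ = ∏ᶠ k, (p θ k / pplus θ) ^ m k)
    (θhat : Θ) (hθhat : ∀ θ, L1 θ ≤ L1 θhat)
    (ψhat : ℝ) (hψhat : ψhat = mplus / (n * pplus θhat)) (hψhat_le : ψhat ≤ 1) :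
    ∀ θ : Θ, ∀ ψ ∈ Set.Icc (0 : ℝ) 1, L θ ψ ≤ L θhat ψhat := by
  classical
  set s : Finset ℕ := hm_fin.toFinset with hs
  -- finprod as finset product
  have hfinprod : ∀ (x : ℕ → ℝ), ∏ᶠ k, x k ^ m k = ∏ k ∈ s, x k ^ m k := by
    intro x
    apply finprod_eq_prod_of_mulSupport_subset
    intro k hk
    simp only [Function.mem_mulSupport] at hk
    simp only [hs, Set.Finite.coe_toFinset, Function.mem_support]
    intro hmk
    exact hk (by rw [hmk, pow_zero])
  have hsum : mplus = ∑ k ∈ s, m k := by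
    rw [hmplus]; exact finsum_eq_sum m hm_fin
  -- key identity : ∏ᶠ p^m = L1 * pplus^mplus
  have hprod : ∀ θ, ∏ᶠ k, p θ k ^ m k = L1 θ * pplus θ ^ mplus := by
    intro θ
    rw [hL1 θ, hfinprod, hfinprod]
    rw [Finset.prod_congr rfl (fun k _ => div_pow (p θ k) (pplus θ) (m k)),
      Finset.prod_div_distrib, Finset.prod_pow_eq_pow_sum, ← hsum,
      div_mul_cancel₀ _ (pow_ne_zero _ (hpplus_pos θ).ne')]
  -- rewrite L
  have hLrw : ∀ θ ψ, L θ ψ = L1 θ * ((ψ * pplus θ) ^ mplus * (1 - ψ * pplus θ) ^ m0) := by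
    intro θ ψ
    rw [hL, hprod]
    have : (1 - ψ) + ψ * p θ 0 = 1 - ψ * pplus θ := by rw [hpplus]; ring
    rw [this, mul_pow]
    ring
  have hL1_nonneg : ∀ θ, 0 ≤ L1 θ := by
    intro θ
    rw [hL1, hfinprod]
    apply Finset.prod_nonneg
    intro k _
    have := hp_nonneg θ k
    have := (hpplus_pos θ).le
    positivity
  have hnpos : 0 < n := lt_of_lt_of_le hmplus_pos hn
  have hnsum : n = mplus + m0 := by omega
  have hnR : (n : ℝ) = (mplus : ℝ) + (m0 : ℝ) := by exact_mod_cast congrArg Nat.cast hnsum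
  set G : ℝ := ((mplus : ℝ) / n) ^ mplus * ((m0 : ℝ) / n) ^ m0 with hG
  have hGnonneg : 0 ≤ G := by positivity
  have hpplus_le_one : ∀ θ, pplus θ ≤ 1 := by
    intro θ; rw [hpplus]; have := hp_nonneg θ 0; linarith
  -- L θhat ψhat = L1 θhat * G
  have hnne : (n : ℝ) ≠ 0 := by positivity
  have hppne : pplus θhat ≠ 0 := (hpplus_pos θhat).ne'
  have hthat : ψhat * pplus θhat = (mplus : ℝ) / n := by
    rw [hψhat]
    field_simp
  have hone : (1 : ℝ) - (mplus : ℝ) / n = (m0 : ℝ) / n := by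
    field_simp
    linarith [hnR]
  have hLhat : L θhat ψhat = L1 θhat * G := by
    rw [hLrw, hthat, hone, hG]
  -- main bound
  intro θ ψ hψ
  obtain ⟨hψ0, hψ1⟩ := hψ
  set t : ℝ := ψ * pplus θ with ht
  have ht0 : 0 ≤ t := mul_nonneg hψ0 (hpplus_pos θ).le
  have ht1 : t ≤ 1 := by
    calc t ≤ 1 * 1 := mul_le_mul hψ1 (hpplus_le_one θ) (hpplus_pos θ).le zero_le_one
      _ = 1 := mul_one 1
  have hgb : t ^ mplus * (1 - t) ^ m0 ≤ G := by
    rw [hG, hnR]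
    exact pow_mul_one_sub_pow_le mplus m0 hmplus_pos hm0_pos t ht0 ht1
  calc L θ ψ = L1 θ * (t ^ mplus * (1 - t) ^ m0) := hLrw θ ψ
    _ ≤ L1 θ * G := mul_le_mul_of_nonneg_left hgb (hL1_nonneg θ)
    _ ≤ L1 θhat * G := mul_le_mul_of_nonneg_right (hθhat θ) hGnonneg
    _ = L θhat ψhat := hLhat.symm
end

section
/- Let λ be a nonnegative integrable random variable on a probability space that is not almost surely constant, with μ := E[λ] > 0 and q := E[e^{−λ}]. Then μ/(1 − q) > 1, and the unique λ* > 0 satisfying λ*/(1 − e^{−λ*}) = μ/(1 − q) obeys 1 − e^{−λ*} > 1 − q. Consequently, for every ψ ∈ (0,1], the pseudo-true presence probability ψ(1 − q)/(1 − e^{−λ*}) is strictly less than ψ. (Core of Proposition 1: ignoring detection heterogeneity yields asymptotic downward bias in the presence probability.) -/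
open MeasureTheory
open scoped ProbabilityTheory

lemma expNeg_strictConvex : StrictConvexOn ℝ Set.univ (fun x : ℝ => Real.exp (-x)) := by
  refine ⟨convex_univ, ?_⟩
  intro x _ y _ hxy a b ha hb hab
  have := strictConvexOn_exp.2 (Set.mem_univ (-x)) (Set.mem_univ (-y))
    (by simpa using hxy) ha hb hab
  simpa [smul_eq_mul, neg_add, mul_neg, add_comm] using this

lemma f_strictMono : StrictMonoOn (fun x : ℝ => x / (1 - Real.exp (-x))) (Set.Ioi 0) := by
  have hderiv : ∀ x : ℝ, 0 < x →
      HasDerivAt (fun x : ℝ => x / (1 - Real.exp (-x)))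
        ((1 * (1 - Real.exp (-x)) - x * Real.exp (-x)) / (1 - Real.exp (-x))^2) x := by
    intro x hx
    have hden : 1 - Real.exp (-x) ≠ 0 := by
      have : Real.exp (-x) < 1 := Real.exp_lt_one_iff.mpr (by linarith)
      linarith
    have h1 : HasDerivAt (fun x : ℝ => 1 - Real.exp (-x)) (Real.exp (-x)) x := by
      have := (Real.hasDerivAt_exp (-x)).comp x (hasDerivAt_neg x)
      simpa using (this.const_sub 1)
    exact (hasDerivAt_id' x).div h1 hden
  apply strictMonoOn_of_deriv_pos (convex_Ioi 0)
  · intro x hx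
    have hx' : (0:ℝ) < x := hx
    exact ((hderiv x hx').continuousAt.continuousWithinAt)
  · intro x hx
    rw [interior_Ioi] at hx
    have hx' : (0:ℝ) < x := hx
    rw [(hderiv x hx').deriv]
    have he : Real.exp (-x) < 1 := Real.exp_lt_one_iff.mpr (by linarith)
    have hnum : 0 < 1 * (1 - Real.exp (-x)) - x * Real.exp (-x) := by
      have := Real.add_one_lt_exp (show x ≠ 0 by linarith)
      have hp : 0 < Real.exp (-x) := Real.exp_pos _
      have hid : Real.exp (-x) * Real.exp x = 1 := by
        rw [← Real.exp_add]; simp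
      nlinarith
    exact div_pos hnum (pow_pos (by linarith) 2)

/-- Core of Proposition 1: ignoring detection heterogeneity yields asymptotic
downward bias in the presence probability.  Here `L` is the random Poisson intensity,
`μ = E[L]`, `q = E[e^{−L}]`, and `l` ranges over the pseudo-true homogeneous intensity. -/
theorem ignoring_detection_heterogeneity_downward_bias
    {Ω : Type*} [MeasureSpace Ω] [IsProbabilityMeasure (ℙ : Measure Ω)]
    (L : Ω → ℝ) (hL_nonneg : ∀ᵐ ω ∂(ℙ : Measure Ω), 0 ≤ L ω) (hL_int : Integrable L)
    (hL_nonconst : ¬ ∃ c : ℝ, L =ᵐ[(ℙ : Measure Ω)] fun _ => c)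
    (μ : ℝ) (hμ : μ = ∫ ω, L ω ∂(ℙ : Measure Ω)) (hμ_pos : 0 < μ)
    (q : ℝ) (hq : q = ∫ ω, Real.exp (-L ω) ∂(ℙ : Measure Ω)) :
    1 < μ / (1 - q) ∧
    (∃! l : ℝ, 0 < l ∧ l / (1 - Real.exp (-l)) = μ / (1 - q)) ∧
    ∀ l : ℝ, 0 < l → l / (1 - Real.exp (-l)) = μ / (1 - q) →
      1 - q < 1 - Real.exp (-l) ∧
      ∀ ψ : ℝ, ψ ∈ Set.Ioc (0 : ℝ) 1 →
        ψ * (1 - q) / (1 - Real.exp (-l)) < ψ := by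
  have hexp_meas : AEStronglyMeasurable (fun ω => Real.exp (-L ω)) (ℙ : Measure Ω) :=
    (Real.continuous_exp.comp continuous_neg).comp_aestronglyMeasurable
      hL_int.aestronglyMeasurable
  have hexp_int : Integrable (fun ω => Real.exp (-L ω)) (ℙ : Measure Ω) := by
    refine (integrable_const (1:ℝ)).mono' hexp_meas ?_
    filter_upwards [hL_nonneg] with ω hω
    rw [Real.norm_eq_abs, abs_of_pos (Real.exp_pos _)]
    exact Real.exp_le_one_iff.mpr (by linarith)
  have hLne0 : ¬ (L =ᵐ[(ℙ : Measure Ω)] fun _ => (0:ℝ)) := fun h => hL_nonconst ⟨0, h⟩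
  -- 1 - q > 0
  have h1q_eq : 1 - q = ∫ ω, (1 - Real.exp (-L ω)) ∂(ℙ : Measure Ω) := by
    rw [hq, integral_sub (integrable_const 1) hexp_int, integral_const]; simp
  have hint1 : Integrable (fun ω => 1 - Real.exp (-L ω)) (ℙ : Measure Ω) :=
    (integrable_const 1).sub hexp_int
  have hnonneg1 : 0 ≤ᵐ[(ℙ : Measure Ω)] fun ω => 1 - Real.exp (-L ω) := by
    filter_upwards [hL_nonneg] with ω hω
    have : Real.exp (-L ω) ≤ 1 := Real.exp_le_one_iff.mpr (by linarith)
    simpa using this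
  have h1q_pos : 0 < 1 - q := by
    rcases lt_or_eq_of_le (integral_nonneg_of_ae hnonneg1) with h | h
    · linarith [h1q_eq ▸ h]
    · exfalso
      have hz : (fun ω => 1 - Real.exp (-L ω)) =ᵐ[(ℙ : Measure Ω)] 0 :=
        (integral_eq_zero_iff_of_nonneg_ae hnonneg1 hint1).mp h.symm
      apply hLne0
      filter_upwards [hz] with ω hω
      have h1 : Real.exp (-L ω) = 1 := by
        have := hω; simp only [Pi.zero_apply] at this; linarith
      have h0 : -L ω = 0 := Real.exp_injective (by rw [h1, Real.exp_zero])
      simpa using (by linarith : L ω = 0)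
  -- μ > 1 - q
  have hμq : 1 - q < μ := by
    have hint2 : Integrable (fun ω => L ω - (1 - Real.exp (-L ω))) (ℙ : Measure Ω) :=
      hL_int.sub hint1
    have hnonneg2 : 0 ≤ᵐ[(ℙ : Measure Ω)] fun ω => L ω - (1 - Real.exp (-L ω)) := by
      filter_upwards [hL_nonneg] with ω hω
      have := Real.add_one_le_exp (-L ω)
      simp only [Pi.zero_apply]; linarith
    have heq2 : ∫ ω, (L ω - (1 - Real.exp (-L ω))) ∂(ℙ : Measure Ω) = μ - (1 - q) := by
      rw [integral_sub hL_int hint1, ← h1q_eq, ← hμ]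
    rcases lt_or_eq_of_le (integral_nonneg_of_ae hnonneg2) with h | h
    · linarith [heq2 ▸ h]
    · exfalso
      have hz : (fun ω => L ω - (1 - Real.exp (-L ω))) =ᵐ[(ℙ : Measure Ω)] 0 :=
        (integral_eq_zero_iff_of_nonneg_ae hnonneg2 hint2).mp h.symm
      apply hLne0
      filter_upwards [hz, hL_nonneg] with ω hω hω'
      simp only [Pi.zero_apply] at hω
      by_contra hne
      have hpos : 0 < L ω := lt_of_le_of_ne hω' (Ne.symm hne)
      have := Real.add_one_lt_exp (show -L ω ≠ 0 by simpa using ne_of_gt hpos)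
      linarith
  have hr1 : 1 < μ / (1 - q) := (one_lt_div h1q_pos).mpr hμq
  -- Jensen: exp(-μ) < q
  have hjensen : Real.exp (-μ) < q := by
    have hcomp : Integrable ((fun x : ℝ => Real.exp (-x)) ∘ L) (ℙ : Measure Ω) := hexp_int
    rcases expNeg_strictConvex.ae_eq_const_or_map_average_lt
        ((Real.continuous_exp.comp continuous_neg).continuousOn) isClosed_univ
        (Filter.Eventually.of_forall fun ω => Set.mem_univ _) hL_int hcomp with h | h
    · exact absurd ⟨_, h⟩ hL_nonconst
    · rw [average_eq_integral, average_eq_integral] at h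
      rw [hμ, hq]
      simpa [Function.comp] using h
  refine ⟨hr1, ?_, ?_⟩
  · -- existence and uniqueness
    set r := μ / (1 - q) with hr
    have hfr : r < r / (1 - Real.exp (-r)) := by
      have hrpos : (0:ℝ) < r := by linarith
      have he : Real.exp (-r) < 1 := Real.exp_lt_one_iff.mpr (by linarith)
      have hd : 0 < 1 - Real.exp (-r) := by linarith
      rw [lt_div_iff₀ hd]
      nlinarith [Real.exp_pos (-r)]
    have ha : (0:ℝ) < r - 1 := by linarith
    have hfa : (r - 1) / (1 - Real.exp (-(r-1))) ≤ r := by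
      have hd : 0 < 1 - Real.exp (-(r-1)) := by
        have : Real.exp (-(r-1)) < 1 := Real.exp_lt_one_iff.mpr (by linarith)
        linarith
      rw [div_le_iff₀ hd]
      have hid : Real.exp (-(r-1)) * Real.exp (r-1) = 1 := by
        rw [← Real.exp_add]; simp
      nlinarith [Real.add_one_le_exp (r-1), Real.exp_pos (-(r-1))]
    have hcont : ContinuousOn (fun x : ℝ => x / (1 - Real.exp (-x))) (Set.Icc (r-1) r) := by
      apply ContinuousOn.div continuousOn_id
      · exact (continuous_const.sub (Real.continuous_exp.comp continuous_neg)).continuousOn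
      · intro x hx
        have hx0 : 0 < x := lt_of_lt_of_le ha hx.1
        have : Real.exp (-x) < 1 := Real.exp_lt_one_iff.mpr (by linarith)
        linarith
    have hmem : r ∈ Set.Icc ((r-1) / (1 - Real.exp (-(r-1)))) (r / (1 - Real.exp (-r))) :=
      ⟨hfa, le_of_lt hfr⟩
    obtain ⟨l, hl_mem, hl_eq⟩ := intermediate_value_Icc (by linarith : r - 1 ≤ r) hcont hmem
    have hl_pos : 0 < l := lt_of_lt_of_le ha hl_mem.1
    have hl_eq' : l / (1 - Real.exp (-l)) = r := by simpa using hl_eq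
    refine ⟨l, ⟨hl_pos, hl_eq'⟩, ?_⟩
    rintro l' ⟨hl'_pos, hl'_eq⟩
    exact f_strictMono.injOn hl'_pos hl_pos (by show l' / _ = l / _; rw [hl'_eq, hl_eq'])
  · -- main inequality
    intro l hl_pos hl_eq
    have hd : 0 < 1 - Real.exp (-l) := by
      have : Real.exp (-l) < 1 := Real.exp_lt_one_iff.mpr (by linarith)
      linarith
    have hdμ : 0 < 1 - Real.exp (-μ) := by
      have : Real.exp (-μ) < 1 := Real.exp_lt_one_iff.mpr (by linarith)
      linarith
    -- f μ < f l, hence μ < l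
    have hfμ : μ / (1 - Real.exp (-μ)) < l / (1 - Real.exp (-l)) := by
      rw [hl_eq]
      exact div_lt_div_of_pos_left hμ_pos h1q_pos (by linarith)
    have hμl : μ < l := (f_strictMono.lt_iff_lt (Set.mem_Ioi.mpr hμ_pos)
      (Set.mem_Ioi.mpr hl_pos)).mp hfμ
    have hcross : l * (1 - q) = μ * (1 - Real.exp (-l)) := by
      field_simp at hl_eq
      linarith [hl_eq]
    have hkey : 1 - q < 1 - Real.exp (-l) := by nlinarith
    refine ⟨hkey, ?_⟩
    intro ψ hψ
    rw [div_lt_iff₀ hd]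
    nlinarith [hψ.1, hψ.2]
end

section
/- Let λ > 0 and ψ ∈ [0,1], and let f be the zero-inflated Poisson pmf: f(0) = 1 − ψ + ψ e^{−λ} and f(k) = ψ e^{−λ} λ^k / k! for k ≥ 1. Then ∑_{k=1}^{∞} (k − λ/(1 − e^{−λ})) f(k) = 0. In particular, the conditional-likelihood estimating function g(y) = y − (λ/(1 − e^{−λ})) 1{y > 0} has mean zero under the zero-inflated Poisson distribution for every value of ψ. -/
/-- The conditional-likelihood estimating function `g(y) = y − (λ/(1−e^{−λ})) 1{y>0}`
has mean zero under the zero-inflated Poisson distribution `ZIP(ψ, λ)`, for every `ψ`. -/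
theorem zip_conditional_score_unbiased
    (lam : ℝ) (hlam : 0 < lam) (ψ : ℝ) (hψ : ψ ∈ Set.Icc (0 : ℝ) 1)
    (f : ℕ → ℝ)
    (hf0 : f 0 = 1 - ψ + ψ * Real.exp (-lam))
    (hf : ∀ k : ℕ, 1 ≤ k → f k = ψ * Real.exp (-lam) * lam ^ k / (Nat.factorial k)) :
    (∑' k : ℕ, (((k + 1 : ℕ) : ℝ) - lam / (1 - Real.exp (-lam))) * f (k + 1)) = 0 ∧
    (∑' k : ℕ, ((k : ℝ) - (lam / (1 - Real.exp (-lam))) * (if 0 < k then 1 else 0)) * f k) = 0 := by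
  set C : ℝ := lam / (1 - Real.exp (-lam)) with hC
  set c : ℝ := ψ * Real.exp (-lam) with hc
  have hne : (1 : ℝ) - Real.exp (-lam) ≠ 0 := by
    have : Real.exp (-lam) < 1 := by
      rw [Real.exp_lt_one_iff]; linarith
    linarith
  -- key pointwise identity
  have key : ∀ k : ℕ, (((k + 1 : ℕ) : ℝ) - C) * f (k + 1) =
      (c * lam) * (lam ^ k / (Nat.factorial k)) -
        (c * C) * (lam ^ (k + 1) / (Nat.factorial (k + 1))) := by
    intro k
    rw [hf (k + 1) (Nat.le_add_left 1 k)]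
    have hfac : ((Nat.factorial (k + 1) : ℝ)) = ((k : ℝ) + 1) * (Nat.factorial k : ℝ) := by
      rw [Nat.factorial_succ]; push_cast; ring
    have h1 : (Nat.factorial k : ℝ) ≠ 0 := Nat.cast_ne_zero.mpr (Nat.factorial_ne_zero k)
    have h2 : ((k : ℝ) + 1) ≠ 0 := by positivity
    rw [hfac]
    push_cast
    field_simp
    ring
  have S1 : Summable fun k : ℕ => lam ^ k / (Nat.factorial k : ℝ) :=
    Real.summable_pow_div_factorial lam
  have S2 : Summable fun k : ℕ => lam ^ (k + 1) / (Nat.factorial (k + 1) : ℝ) :=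
    (summable_nat_add_iff 1).mpr S1
  have T1 : (∑' k : ℕ, lam ^ k / (Nat.factorial k : ℝ)) = Real.exp lam := by
    rw [Real.exp_eq_exp_ℝ, NormedSpace.exp_eq_tsum_div]
  have T2 : (∑' k : ℕ, lam ^ (k + 1) / (Nat.factorial (k + 1) : ℝ)) = Real.exp lam - 1 := by
    have := Summable.tsum_eq_zero_add S1
    rw [T1] at this
    simp only [pow_zero, Nat.factorial_zero, Nat.cast_one, div_one] at this
    linarith
  have first : (∑' k : ℕ, (((k + 1 : ℕ) : ℝ) - C) * f (k + 1)) = 0 := by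
    calc (∑' k : ℕ, (((k + 1 : ℕ) : ℝ) - C) * f (k + 1))
        = ∑' k : ℕ, ((c * lam) * (lam ^ k / (Nat.factorial k)) -
            (c * C) * (lam ^ (k + 1) / (Nat.factorial (k + 1)))) := by
          exact tsum_congr key
      _ = (c * lam) * Real.exp lam - (c * C) * (Real.exp lam - 1) := by
          rw [Summable.tsum_sub (S1.mul_left _) (S2.mul_left _), tsum_mul_left, tsum_mul_left, T1, T2]
      _ = 0 := by
          rw [hc, hC]
          have hexp : Real.exp (-lam) * (Real.exp lam - 1) = 1 - Real.exp (-lam) := by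
            rw [mul_sub, ← Real.exp_add]
            simp
          have h3 : Real.exp (-lam) * Real.exp lam = 1 := by
            rw [← Real.exp_add]; simp
          field_simp
          linear_combination (-(ψ * lam * Real.exp (-lam))) * h3
  refine ⟨first, ?_⟩
  set a : ℕ → ℝ := fun k => ((k : ℝ) - C * (if 0 < k then 1 else 0)) * f k with ha
  have ha0 : a 0 = 0 := by simp [ha]
  have hashift : ∀ k : ℕ, a (k + 1) = (((k + 1 : ℕ) : ℝ) - C) * f (k + 1) := by
    intro k
    simp [ha, Nat.succ_pos]
  have Sa : Summable a := by
    rw [← summable_nat_add_iff 1]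
    have : Summable fun k : ℕ => ((c * lam) * (lam ^ k / (Nat.factorial k : ℝ)) -
        (c * C) * (lam ^ (k + 1) / (Nat.factorial (k + 1) : ℝ))) :=
      (S1.mul_left _).sub (S2.mul_left _)
    refine this.congr fun k => ?_
    rw [hashift k, key k]
  have := Summable.tsum_eq_zero_add Sa
  rw [ha0, zero_add] at this
  calc (∑' k : ℕ, ((k : ℝ) - C * (if 0 < k then 1 else 0)) * f k)
      = ∑' k : ℕ, a (k + 1) := this
    _ = ∑' k : ℕ, (((k + 1 : ℕ) : ℝ) - C) * f (k + 1) := tsum_congr hashift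
    _ = 0 := first
end

section
/- Let π_i ∈ (0,1) and ψ_i ∈ [0,1) for i in a nonempty finite index set S, with ψ̄ the average of the ψ_i. Suppose (π_i) and (ψ_i) monovary, i.e. for all i, j ∈ S, π_i < π_j implies ψ_i ≤ ψ_j. If ω* ∈ [0,1) satisfies ∑_{i∈S} π_i (ψ_i − ω*)/(1 − ω* π_i) = 0, then ω* ≥ ψ̄. (Positively related detection and presence probabilities lead to overestimation of the average presence probability when presence heterogeneity is ignored.) -/
open Finset

/-- Positively related detection and presence probabilities lead to overestimation of the
average presence probability when presence heterogeneity is ignored: if `(πᵢ)` and `(ψᵢ)`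
monovary, any root `ω* ∈ [0,1)` of `∑ᵢ πᵢ(ψᵢ − ω)/(1 − ω πᵢ) = 0` satisfies `ω* ≥ ψ̄`. -/
theorem monovary_root_ge_average_presence
    {ι : Type*} [Fintype ι] [Nonempty ι]
    (π : ι → ℝ) (hπ : ∀ i, π i ∈ Set.Ioo (0 : ℝ) 1)
    (ψ : ι → ℝ) (hψ : ∀ i, ψ i ∈ Set.Ico (0 : ℝ) 1)
    (hmono : ∀ i j : ι, π i < π j → ψ i ≤ ψ j)
    (ψbar : ℝ) (hψbar : ψbar = (∑ i : ι, ψ i) / (Fintype.card ι))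
    (ω : ℝ) (hω : ω ∈ Set.Ico (0 : ℝ) 1)
    (hroot : ∑ i : ι, π i * (ψ i - ω) / (1 - ω * π i) = 0) :
    ψbar ≤ ω := by
  obtain ⟨hω0, hω1⟩ := hω
  set f : ι → ℝ := fun i => π i / (1 - ω * π i) with hf
  have hden : ∀ i, 0 < 1 - ω * π i := by
    intro i
    nlinarith [(hπ i).1, (hπ i).2, hω0, hω1]
  have hfpos : ∀ i, 0 < f i := fun i => div_pos (hπ i).1 (hden i)
  -- f monovaries with ψ
  have hmonof : Monovary f ψ := by
    intro i j hij
    have hπij : π i ≤ π j := by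
      by_contra h
      push_neg at h
      exact absurd (hmono j i h) (not_le.mpr hij)
    rw [hf]
    rw [div_le_div_iff₀ (hden i) (hden j)]
    nlinarith [(hπ i).1, (hπ j).1, hω0]
  have hmonof' : Monovary f (fun i => ψ i - ω) := fun i j h => hmonof (by simpa using h)
  have cheb := hmonof'.sum_mul_sum_le_card_mul_sum
  have hrw : ∀ i, f i * (ψ i - ω) = π i * (ψ i - ω) / (1 - ω * π i) := by
    intro i; rw [hf]; field_simp
  have hsum0 : ∑ i : ι, f i * (ψ i - ω) = 0 := by
    rw [Finset.sum_congr rfl (fun i _ => hrw i)]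
    exact hroot
  rw [hsum0] at cheb
  simp only [mul_zero] at cheb
  have hfsum : 0 < ∑ i : ι, f i := Finset.sum_pos (fun i _ => hfpos i) univ_nonempty
  have hψω : ∑ i : ι, (ψ i - ω) ≤ 0 := nonpos_of_mul_nonpos_right cheb hfsum |>.trans_eq rfl
  have hcard : (0:ℝ) < Fintype.card ι := by
    exact_mod_cast Fintype.card_pos
  rw [hψbar, div_le_iff₀ hcard]
  have : ∑ i : ι, (ψ i - ω) = (∑ i : ι, ψ i) - Fintype.card ι * ω := by
    rw [Finset.sum_sub_distrib]
    simp [Finset.card_univ, mul_comm]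
  linarith [this ▸ hψω]
end

section
/- Let π_i ∈ (0,1) and ψ_i ∈ [0,1) for i in a nonempty finite index set S, with ψ̄ the average of the ψ_i. Suppose (π_i) and (ψ_i) antivary, i.e. for all i, j ∈ S, π_i < π_j implies ψ_i ≥ ψ_j. If ω* ∈ [0,1) satisfies ∑_{i∈S} π_i (ψ_i − ω*)/(1 − ω* π_i) = 0, then ω* ≤ ψ̄. (Negatively related detection and presence probabilities lead to underestimation of the average presence probability when presence heterogeneity is ignored.) -/
open Finset

/-- Negatively related detection and presence probabilities lead to underestimation of the
average presence probability when presence heterogeneity is ignored: if `(πᵢ)` and `(ψᵢ)`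
antivary, any root `ω* ∈ [0,1)` of `∑ᵢ πᵢ(ψᵢ − ω)/(1 − ω πᵢ) = 0` satisfies `ω* ≤ ψ̄`. -/
theorem antivary_root_le_average_presence
    {ι : Type*} [Fintype ι] [Nonempty ι]
    (π : ι → ℝ) (hπ : ∀ i, π i ∈ Set.Ioo (0 : ℝ) 1)
    (ψ : ι → ℝ) (hψ : ∀ i, ψ i ∈ Set.Ico (0 : ℝ) 1)
    (hanti : ∀ i j : ι, π i < π j → ψ j ≤ ψ i)
    (ψbar : ℝ) (hψbar : ψbar = (∑ i : ι, ψ i) / (Fintype.card ι))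
    (ω : ℝ) (hω : ω ∈ Set.Ico (0 : ℝ) 1)
    (hroot : ∑ i : ι, π i * (ψ i - ω) / (1 - ω * π i) = 0) :
    ω ≤ ψbar := by
  obtain ⟨hω0, hω1⟩ := hω
  set f : ι → ℝ := fun i => π i / (1 - ω * π i) with hf
  have hden : ∀ i, 0 < 1 - ω * π i := by
    intro i
    obtain ⟨h1, h2⟩ := hπ i
    nlinarith
  have hfpos : ∀ i, 0 < f i := fun i => div_pos (hπ i).1 (hden i)
  have hfmono : ∀ i j, π j ≤ π i → f j ≤ f i := by
    intro i j h
    rw [hf, div_le_div_iff₀ (hden j) (hden i)]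
    nlinarith [(hπ i).1, (hπ j).1]
  have hAnti : Antivary f ψ := by
    intro i j hlt
    apply hfmono
    by_contra h
    exact absurd (hanti i j (lt_of_not_ge h)) (not_le.mpr hlt)
  have hsum : ∑ i : ι, f i * ψ i = ω * ∑ i : ι, f i := by
    have : ∑ i : ι, (f i * ψ i - ω * f i) = 0 := by
      rw [← hroot]
      apply Finset.sum_congr rfl
      intro i _
      simp only [hf]
      field_simp [(hden i).ne']
    have h2 := Finset.sum_sub_distrib (f := fun i => f i * ψ i) (g := fun i => ω * f i)
      (s := Finset.univ)
    rw [h2] at this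
    rw [Finset.mul_sum]
    linarith
  have hcheb := hAnti.card_mul_sum_le_sum_mul_sum
  have hcard : (0 : ℝ) < (Fintype.card ι : ℝ) := by
    exact_mod_cast Fintype.card_pos
  have hSf : 0 < ∑ i : ι, f i := Finset.sum_pos (fun i _ => hfpos i) univ_nonempty
  rw [hsum] at hcheb
  rw [hψbar, le_div_iff₀ hcard]
  nlinarith
end

section
/- Let T ≥ 2 be an integer and let p be a random variable taking values in (0,1) almost surely, not almost surely constant, with μ := E[p] and q := E[(1 − p)^T]. Then 1 < Tμ/(1 − q) < T, there is a unique p* ∈ (0,1) with T p*/(1 − (1 − p*)^T) = Tμ/(1 − q), and it satisfies 1 − (1 − p*)^T > 1 − q. Consequently, for every ψ ∈ (0,1], the pseudo-true presence probability ψ(1 − q)/(1 − (1 − p*)^T) is strictly less than ψ. (Binomial analogue of Proposition 1: ignoring detection heterogeneity in the zero-inflated binomial occupancy model yields asymptotic downward bias in the presence probability.) -/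
open MeasureTheory
open scoped ProbabilityTheory

lemma my_integral_lt {Ω : Type*} [MeasureSpace Ω] [IsProbabilityMeasure (ℙ : Measure Ω)]
    {f g : Ω → ℝ} (hf : Integrable f) (hg : Integrable g)
    (h : ∀ᵐ ω ∂(ℙ : Measure Ω), f ω < g ω) :
    ∫ ω, f ω ∂(ℙ : Measure Ω) < ∫ ω, g ω ∂(ℙ : Measure Ω) := by
  have hsub : Integrable (fun ω => g ω - f ω) (ℙ : Measure Ω) := hg.sub hf
  have hpos : 0 < ∫ ω, (g ω - f ω) ∂(ℙ : Measure Ω) := by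
    rw [integral_pos_iff_support_of_nonneg_ae
      (h.mono fun ω hω => sub_nonneg.2 hω.le) hsub]
    by_contra hc
    push_neg at hc
    have h0 : (ℙ : Measure Ω) (Function.support fun ω => g ω - f ω) = 0 :=
      le_antisymm (le_of_not_gt (by simpa using hc)) zero_le
    have h0' : ∀ᵐ ω ∂(ℙ : Measure Ω), g ω - f ω = 0 := by
      rw [ae_iff]
      have : {ω | ¬ g ω - f ω = 0} = Function.support fun ω => g ω - f ω := by
        ext ω; simp [Function.mem_support]
      rw [this]; exact h0
    obtain ⟨ω, h1, h2⟩ := (h.and h0').exists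
    linarith
  have := integral_sub hg hf
  rw [this] at hpos
  linarith

noncomputable def gS (T : ℕ) (x : ℝ) : ℝ := ∑ k ∈ Finset.range T, x ^ k

lemma gS_identity (T : ℕ) (x : ℝ) : (1 - x) * gS T x = 1 - x ^ T := by
  have := geom_sum_mul x T
  unfold gS
  nlinarith [this]

lemma gS_lt (T : ℕ) (hT : 2 ≤ T) {x y : ℝ} (hx : 0 ≤ x) (hxy : x < y) :
    gS T x < gS T y := by
  refine Finset.sum_lt_sum (fun i _ => pow_le_pow_left₀ hx hxy.le i) ⟨1, ?_, ?_⟩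
  · simp [Finset.mem_range]; omega
  · simpa using hxy

lemma gS_zero (T : ℕ) (hT : 2 ≤ T) : gS T 0 = 1 := by
  unfold gS
  rw [geom_sum_eq (by norm_num), zero_pow (by omega)]
  norm_num

lemma gS_one (T : ℕ) : gS T 1 = T := by simp [gS]

lemma gS_cont (T : ℕ) : Continuous (gS T) :=
  continuous_finset_sum _ fun i _ => continuous_pow i

lemma gS_inj (T : ℕ) (hT : 2 ≤ T) {x y : ℝ} (hx : 0 ≤ x) (hy : 0 ≤ y)
    (h : gS T x = gS T y) : x = y := by
  rcases lt_trichotomy x y with hlt | he | hgt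
  · exact absurd h (gS_lt T hT hx hlt).ne
  · exact he
  · exact absurd h.symm (gS_lt T hT hy hgt).ne

lemma my_strictConvex (T : ℕ) (hT : 2 ≤ T) :
    StrictConvexOn ℝ (Set.Iic (1:ℝ)) (fun x => (1 - x) ^ T) := by
  have h := strictConvexOn_pow hT
  constructor
  · exact convex_Iic 1
  · intro x hx y hy hxy a b ha hb hab
    have h1x : (0:ℝ) ≤ 1 - x := by simpa using hx
    have h1y : (0:ℝ) ≤ 1 - y := by simpa using hy
    have := h.2 (Set.mem_Ici.2 h1x) (Set.mem_Ici.2 h1y)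
      (by intro hc; apply hxy; linarith) ha hb hab
    simp only at this ⊢
    have harg : a • (1 - x) + b • (1 - y) = 1 - (a • x + b • y) := by
      simp only [smul_eq_mul]; nlinarith
    rw [harg] at this
    simpa using this

/-- Binomial analogue of Proposition 1: ignoring detection heterogeneity in the
zero-inflated binomial occupancy model yields asymptotic downward bias in the presence
probability.  Here `p` is the random detection probability, `μ = E[p]`,
`q = E[(1−p)^T]`, and `p*` is the pseudo-true homogeneous detection probability. -/
theorem zib_ignoring_detection_heterogeneity_downward_bias
    {Ω : Type*} [MeasureSpace Ω] [IsProbabilityMeasure (ℙ : Measure Ω)]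
    (T : ℕ) (hT : 2 ≤ T)
    (p : Ω → ℝ) (hp_mem : ∀ᵐ ω ∂(ℙ : Measure Ω), p ω ∈ Set.Ioo (0 : ℝ) 1)
    (hp_int : Integrable p)
    (hp_nonconst : ¬ ∃ c : ℝ, p =ᵐ[(ℙ : Measure Ω)] fun _ => c)
    (μ : ℝ) (hμ : μ = ∫ ω, p ω ∂(ℙ : Measure Ω))
    (q : ℝ) (hq : q = ∫ ω, (1 - p ω) ^ T ∂(ℙ : Measure Ω)) :
    1 < T * μ / (1 - q) ∧ T * μ / (1 - q) < T ∧
    (∃! pstar : ℝ, pstar ∈ Set.Ioo (0 : ℝ) 1 ∧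
      T * pstar / (1 - (1 - pstar) ^ T) = T * μ / (1 - q)) ∧
    ∀ pstar : ℝ, pstar ∈ Set.Ioo (0 : ℝ) 1 →
      T * pstar / (1 - (1 - pstar) ^ T) = T * μ / (1 - q) →
        1 - q < 1 - (1 - pstar) ^ T ∧
        ∀ ψ : ℝ, ψ ∈ Set.Ioc (0 : ℝ) 1 →
          ψ * (1 - q) / (1 - (1 - pstar) ^ T) < ψ := by
  have hT0 : (0:ℝ) < T := by positivity
  have hT1 : (1:ℝ) < T := by exact_mod_cast lt_of_lt_of_le one_lt_two (by exact_mod_cast hT)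
  -- integrability of (1-p)^T
  have hpm : AEStronglyMeasurable p (ℙ : Measure Ω) := hp_int.1
  have hq_int : Integrable (fun ω => (1 - p ω) ^ T) (ℙ : Measure Ω) := by
    refine (integrable_const (1:ℝ)).mono' ((aestronglyMeasurable_const.sub hpm).pow _) ?_
    filter_upwards [hp_mem] with ω hω
    have h0 : (0:ℝ) ≤ 1 - p ω := by linarith [hω.2]
    have h1 : (1 - p ω) ^ T ≤ 1 := pow_le_one₀ h0 (by linarith [hω.1])
    rw [Real.norm_eq_abs, abs_of_nonneg (pow_nonneg h0 _)]; exact h1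
  have hr_int : Integrable (fun ω => 1 - (1 - p ω) ^ T) (ℙ : Measure Ω) :=
    (integrable_const 1).sub hq_int
  -- μ bounds
  have hμ0 : 0 < μ := by
    rw [hμ]
    have := my_integral_lt (integrable_const 0) hp_int (hp_mem.mono fun ω h => h.1)
    simpa using this
  have hμ1 : μ < 1 := by
    rw [hμ]
    have := my_integral_lt hp_int (integrable_const 1)
      (hp_mem.mono fun ω h => h.2)
    simpa using this
  -- pointwise identity and bounds
  have hident : ∀ x : ℝ, x * gS T (1 - x) = 1 - (1 - x) ^ T := by
    intro x
    have := gS_identity T (1 - x)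
    rw [sub_sub_cancel] at this
    exact this
  have hgb : ∀ x : ℝ, x ∈ Set.Ioo (0:ℝ) 1 → 1 < gS T (1 - x) ∧ gS T (1 - x) < T := by
    intro x hx
    constructor
    · have := gS_lt T hT (le_refl 0) (show (0:ℝ) < 1 - x by linarith [hx.2])
      rw [gS_zero T hT] at this; exact this
    · have := gS_lt T hT (show (0:ℝ) ≤ 1 - x by linarith [hx.2])
        (show 1 - x < 1 by linarith [hx.1])
      rw [gS_one T] at this; exact this
  -- 1 - q as integral
  have h1q_eq : 1 - q = ∫ ω, (1 - (1 - p ω) ^ T) ∂(ℙ : Measure Ω) := by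
    rw [integral_sub (integrable_const 1) hq_int, hq]
    simp
  have hμlt : μ < 1 - q := by
    rw [hμ, h1q_eq]
    refine my_integral_lt hp_int hr_int ?_
    filter_upwards [hp_mem] with ω hω
    have hid := hident (p ω)
    have hg := (hgb (p ω) hω).1
    nlinarith [hω.1]
  have hqT : 1 - q < T * μ := by
    have : (1:ℝ) - q < ∫ ω, (T : ℝ) * p ω ∂(ℙ : Measure Ω) := by
      rw [h1q_eq]
      refine my_integral_lt hr_int (hp_int.const_mul T) ?_
      filter_upwards [hp_mem] with ω hω
      have hid := hident (p ω)
      have hg := (hgb (p ω) hω).2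
      nlinarith [hω.1]
    rwa [integral_const_mul, ← hμ] at this
  have h1q0 : (0:ℝ) < 1 - q := lt_trans hμ0 hμlt
  -- part 1 and 2
  have part1 : 1 < (T:ℝ) * μ / (1 - q) := (one_lt_div h1q0).2 hqT
  have part2 : (T:ℝ) * μ / (1 - q) < T := by
    rw [div_lt_iff₀ h1q0]
    nlinarith
  -- Jensen
  have hJ : (1 - μ) ^ T < q := by
    have hconv := my_strictConvex T hT
    have hcont : ContinuousOn (fun x : ℝ => (1 - x) ^ T) (Set.Iic 1) :=
      ((continuous_const.sub continuous_id).pow T).continuousOn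
    have hgi : Integrable ((fun x : ℝ => (1 - x) ^ T) ∘ p) (ℙ : Measure Ω) := by
      exact hq_int
    rcases hconv.ae_eq_const_or_map_average_lt hcont isClosed_Iic
        (hp_mem.mono fun ω h => le_of_lt h.2) hp_int hgi with h | h
    · exact absurd ⟨_, h⟩ hp_nonconst
    · rw [average_eq_integral, average_eq_integral] at h
      rw [hμ, hq]
      simpa [Function.comp] using h
  -- the target value
  set v : ℝ := (1 - q) / μ with hv
  have hv1 : 1 < v := (one_lt_div hμ0).2 hμlt
  have hvT : v < T := (div_lt_iff₀ hμ0).2 hqT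
  -- equivalence of equation
  have hiff : ∀ x : ℝ, x ∈ Set.Ioo (0:ℝ) 1 →
      ((T : ℝ) * x / (1 - (1 - x) ^ T) = T * μ / (1 - q) ↔ gS T (1 - x) = v) := by
    intro x hx
    have hid := hident x
    have hg1 := (hgb x hx).1
    have hDpos : 0 < 1 - (1 - x) ^ T := by nlinarith [hx.1]
    constructor
    · intro he
      have h1 : (T : ℝ) * x * (1 - q) = T * μ * (1 - (1 - x) ^ T) :=
        (div_eq_div_iff hDpos.ne' h1q0.ne').1 he
      rw [← hid] at h1
      have hTx : (T:ℝ) * x ≠ 0 := ne_of_gt (mul_pos hT0 hx.1)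
      rw [hv, eq_div_iff hμ0.ne']
      have h2 : ((T:ℝ) * x) * (1 - q) = ((T:ℝ) * x) * (gS T (1 - x) * μ) := by ring_nf; ring_nf at h1; linarith
      have := mul_left_cancel₀ hTx h2
      linarith
    · intro hgv
      have hv0 : v ≠ 0 := (lt_trans zero_lt_one hv1).ne'
      rw [← hid, hgv, mul_comm x v, mul_div_mul_right (T:ℝ) v hx.1.ne', hv,
        div_div_eq_mul_div]
  -- existence
  have hgcont : ContinuousOn (gS T) (Set.Icc 0 1) := (gS_cont T).continuousOn
  have himg : v ∈ gS T '' Set.Ioo (0:ℝ) 1 := by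
    apply intermediate_value_Ioo (by norm_num : (0:ℝ) ≤ 1) hgcont
    rw [gS_zero T hT, gS_one T]
    exact ⟨hv1, hvT⟩
  obtain ⟨x, hxmem, hxval⟩ := himg
  have hpstar_mem : 1 - x ∈ Set.Ioo (0:ℝ) 1 := ⟨by linarith [hxmem.2], by linarith [hxmem.1]⟩
  have hpstar_eq : (T : ℝ) * (1 - x) / (1 - (1 - (1 - x)) ^ T) = T * μ / (1 - q) := by
    rw [(hiff (1 - x) hpstar_mem)]
    rw [sub_sub_cancel]
    exact hxval
  refine ⟨part1, part2, ⟨1 - x, ⟨hpstar_mem, hpstar_eq⟩, ?_⟩, ?_⟩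
  · rintro y ⟨hymem, hyeq⟩
    have hgy : gS T (1 - y) = v := (hiff y hymem).1 hyeq
    have hgx : gS T (1 - (1 - x)) = v := by rw [sub_sub_cancel]; exact hxval
    have := gS_inj T hT (by linarith [hymem.2]) (by linarith [hpstar_mem.2])
      (hgy.trans hgx.symm)
    linarith
  · intro pstar hps heq
    have hgps : gS T (1 - pstar) = v := (hiff pstar hps).1 heq
    -- Jensen consequence: v < gS T (1 - μ)
    have hidμ := hident μ
    have hvlt : v < gS T (1 - μ) := by
      have h1 : 1 - q < 1 - (1 - μ) ^ T := by linarith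
      rw [hv, div_lt_iff₀ hμ0]
      nlinarith
    -- hence μ < pstar
    have hps_gt : μ < pstar := by
      by_contra hc
      push_neg at hc
      have : gS T (1 - μ) ≤ gS T (1 - pstar) := by
        rcases eq_or_lt_of_le hc with he | hlt
        · rw [he]
        · exact le_of_lt (gS_lt T hT (by linarith [hps.2]) (by linarith))
      linarith
    have hid := hident pstar
    have hD : 1 - (1 - pstar) ^ T = pstar * v := by rw [← hid, hgps]
    have hkey : 1 - q < 1 - (1 - pstar) ^ T := by
      rw [hD, hv, mul_div_assoc', lt_div_iff₀ hμ0]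
      nlinarith
    refine ⟨hkey, ?_⟩
    intro ψ hψ
    have hDpos : 0 < 1 - (1 - pstar) ^ T := lt_trans h1q0 hkey
    rw [div_lt_iff₀ hDpos]
    nlinarith [hψ.1]
end
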